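/- Let Ω ⊂ ℝⁿ be an open, bounded, connected set with Lipschitz boundary, let d_I > 0, β > 0, γ > 0, δ > 0, α ∈ [0,1], and let S̃ : Ω̄ → ℝ be continuous, bounded, and positive. Define λ(S̃) := −inf{ ∫_Ω ( d_I|∇φ|² + ((γ+δ) − β(1−α)²S̃)φ² ) dx : φ admissible with ∫_Ω φ² dx = 1 } and R₀ := sup{ ∫_Ω β(1−α)² S̃ φ² dx / ∫_Ω ( d_I|∇φ|² + (γ+δ)φ² ) dx : φ admissible }. Then R₀ − 1 and λ(S̃) have the same sign: λ(S̃) > 0 if and only if R₀ > 1, λ(S̃) = 0 if and only if R₀ = 1, and λ(S̃) < 0 if and only if R₀ < 1. -/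

import Mathlib

/-!
Write `N φ = ∫ φ²`, `Q φ = ∫ (d_I |∇φ|² + (γ + δ) φ²)` and `B φ = ∫ β (1 - α)² S̃ φ²`, so that
`λ(S̃) = -inf {Q φ - B φ : N φ = 1}` and `R₀ = sup {B φ / Q φ}`. All three forms scale by `a²`
under `φ ↦ a φ`, so the normalisation `N φ = 1` is harmless, and `Q > 0`; hence
`Q φ - B φ < 0 ↔ B φ / Q φ > 1`, which gives `λ > 0 ↔ R₀ > 1`. The strict inequalities in the
other direction need uniform bounds: coercivity `Q ≥ (γ + δ) N` and boundedness `0 ≤ B ≤ M N`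
(from the bound on `S̃`) turn `inf (Q - B) / N = s > 0` into `B / Q ≤ M / (M + s) < 1`, and
`R₀ < 1` into `Q - B ≥ (1 - R₀)(γ + δ) N`. The case of equality is what remains.
-/

open MeasureTheory Set Filter Topology

/-- The spatial Laplacian of `f : ℝⁿ → ℝ`, as the sum of second partial derivatives. -/
noncomputable def Lap {n : ℕ} (f : EuclideanSpace ℝ (Fin n) → ℝ)
    (x : EuclideanSpace ℝ (Fin n)) : ℝ :=
  ∑ i : Fin n, fderiv ℝ (fun y => fderiv ℝ f y (EuclideanSpace.single i 1)) x
    (EuclideanSpace.single i 1)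

/-- The sup-norm `‖g‖_∞ = sup_{x ∈ Ω̄} |g x|` over the closure of `Ω`. -/
noncomputable def supN {n : ℕ} (Ω : Set (EuclideanSpace ℝ (Fin n)))
    (g : EuclideanSpace ℝ (Fin n) → ℝ) : ℝ :=
  ⨆ x : closure Ω, |g x|

/-- Classical regularity on the time interval `J`: for each `t ∈ J`, `u (·,t) ∈ C²(Ω) ∩ C(Ω̄)`,
and for each `x ∈ Ω̄`, `u (x,·)` is continuously differentiable on `J`. -/
def ClassicalOn {n : ℕ} (Ω : Set (EuclideanSpace ℝ (Fin n)))
    (u : EuclideanSpace ℝ (Fin n) → ℝ → ℝ) (J : Set ℝ) : Prop :=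
  (∀ t ∈ J, ContDiffOn ℝ 2 (fun x => u x t) Ω ∧ ContinuousOn (fun x => u x t) (closure Ω)) ∧
  ∀ x ∈ closure Ω, ContDiffOn ℝ 1 (fun s => u x s) J

/-- Zero-flux (homogeneous Neumann) boundary condition: for each `t ∈ J`, the spatial
gradient of `u (·,t)` vanishes at every point of `∂Ω`. -/
def ZeroFlux {n : ℕ} (Ω : Set (EuclideanSpace ℝ (Fin n)))
    (u : EuclideanSpace ℝ (Fin n) → ℝ → ℝ) (J : Set ℝ) : Prop :=
  ∀ t ∈ J, ∀ x ∈ frontier Ω, gradient (fun y => u y t) x = 0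

/-- The admissible test class: continuously differentiable `φ` with
`0 < ∫_Ω φ² < ∞` and `∫_Ω |∇φ|² < ∞`. -/
def AdmissibleTest {n : ℕ} (Ω : Set (EuclideanSpace ℝ (Fin n)))
    (φ : EuclideanSpace ℝ (Fin n) → ℝ) : Prop :=
  ContDiffOn ℝ 1 φ Ω ∧ IntegrableOn (fun x => φ x ^ 2) Ω ∧
  0 < (∫ x in Ω, φ x ^ 2) ∧ IntegrableOn (fun x => ‖gradient φ x‖ ^ 2) Ω

/-- The principal eigenvalue `λ` of `dc Δ + (w - κ)` with Neumann boundary conditions,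
via its variational characterization. -/
noncomputable def principalEig {n : ℕ} (Ω : Set (EuclideanSpace ℝ (Fin n)))
    (dc κ : ℝ) (w : EuclideanSpace ℝ (Fin n) → ℝ) : ℝ :=
  -sInf {r : ℝ | ∃ φ : EuclideanSpace ℝ (Fin n) → ℝ, AdmissibleTest Ω φ ∧
    (∫ x in Ω, φ x ^ 2) = 1 ∧
    r = ∫ x in Ω, (dc * ‖gradient φ x‖ ^ 2 + (κ - w x) * φ x ^ 2)}

/-- The basic reproduction number associated to the weight `w`, damping `κ` and
diffusion `dc`, via its variational characterization. -/
noncomputable def reproNumber {n : ℕ} (Ω : Set (EuclideanSpace ℝ (Fin n)))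
    (dc κ : ℝ) (w : EuclideanSpace ℝ (Fin n) → ℝ) : ℝ :=
  sSup {r : ℝ | ∃ φ : EuclideanSpace ℝ (Fin n) → ℝ, AdmissibleTest Ω φ ∧
    r = (∫ x in Ω, w x * φ x ^ 2) /
      (∫ x in Ω, (dc * ‖gradient φ x‖ ^ 2 + κ * φ x ^ 2))}

theorem eq_iff_eq_of_lt_iff_of_gt_iff {α β : Type*} [LinearOrder α] [LinearOrder β]
    {a x : α} {b y : β} (hlt : a < x ↔ y < b) (hgt : x < a ↔ b < y) : a = x ↔ b = y := by
  rw [le_antisymm_iff, le_antisymm_iff, ← not_lt, ← not_lt, ← not_lt, ← not_lt, hlt, hgt, and_comm]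

section RayleighQuotient

variable {ι : Type*}

def energyLevels (P : ι → Prop) (N Q B : ι → ℝ) : Set ℝ :=
  {r | ∃ φ, P φ ∧ N φ = 1 ∧ r = Q φ - B φ}

def rayleighQuotients (P : ι → Prop) (Q B : ι → ℝ) : Set ℝ :=
  {r | ∃ φ, P φ ∧ r = B φ / Q φ}

structure IsRayleighTriple (P : ι → Prop) (N Q B : ι → ℝ) (κ M : ℝ) : Prop where
  nonempty : ∃ φ, P φ
  pos : ∀ φ, P φ → 0 < N φ
  coercive_pos : 0 < κ
  coercive : ∀ φ, P φ → κ * N φ ≤ Q φ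
  nonneg : ∀ φ, P φ → 0 ≤ B φ
  le_mul : ∀ φ, P φ → B φ ≤ M * N φ
  homogeneous :
    ∀ φ, P φ → ∀ c > 0, ∃ ψ, P ψ ∧ N ψ = c * N φ ∧ Q ψ = c * Q φ ∧ B ψ = c * B φ

namespace IsRayleighTriple

variable {P : ι → Prop} {N Q B : ι → ℝ} {κ M : ℝ}

theorem div_mem_energyLevels (h : IsRayleighTriple P N Q B κ M) {φ : ι} (hφ : P φ) :
    (Q φ - B φ) / N φ ∈ energyLevels P N Q B := by
  obtain ⟨ψ, hψ, hNψ, hQψ, hBψ⟩ := h.homogeneous φ hφ (N φ)⁻¹ (inv_pos.2 (h.pos φ hφ))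
  refine ⟨ψ, hψ, by rw [hNψ, inv_mul_cancel₀ (h.pos φ hφ).ne'], ?_⟩
  rw [hQψ, hBψ, div_eq_inv_mul, mul_sub]

theorem Q_pos (h : IsRayleighTriple P N Q B κ M) {φ : ι} (hφ : P φ) : 0 < Q φ :=
  (mul_pos h.coercive_pos (h.pos φ hφ)).trans_le (h.coercive φ hφ)

theorem energyLevels_nonempty (h : IsRayleighTriple P N Q B κ M) :
    (energyLevels P N Q B).Nonempty :=
  let ⟨_, hφ⟩ := h.nonempty
  ⟨_, h.div_mem_energyLevels hφ⟩

theorem rayleighQuotients_nonempty (h : IsRayleighTriple P N Q B κ M) :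
    (rayleighQuotients P Q B).Nonempty :=
  let ⟨φ, hφ⟩ := h.nonempty
  ⟨_, φ, hφ, rfl⟩

theorem bddBelow_energyLevels (h : IsRayleighTriple P N Q B κ M) :
    BddBelow (energyLevels P N Q B) := by
  refine ⟨κ - M, ?_⟩
  rintro r ⟨φ, hφ, hNφ, rfl⟩
  have hQφ := h.coercive φ hφ
  have hBφ := h.le_mul φ hφ
  rw [hNφ, mul_one] at hQφ hBφ
  linarith

theorem M_nonneg (h : IsRayleighTriple P N Q B κ M) : 0 ≤ M :=
  let ⟨φ, hφ⟩ := h.nonempty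
  nonneg_of_mul_nonneg_left ((h.nonneg φ hφ).trans (h.le_mul φ hφ)) (h.pos φ hφ)

theorem bddAbove_rayleighQuotients (h : IsRayleighTriple P N Q B κ M) :
    BddAbove (rayleighQuotients P Q B) := by
  refine ⟨M / κ, ?_⟩
  rintro r ⟨φ, hφ, rfl⟩
  rw [div_le_div_iff₀ (h.Q_pos hφ) h.coercive_pos]
  nlinarith [mul_le_mul_of_nonneg_left (h.coercive φ hφ) h.M_nonneg,
    mul_le_mul_of_nonneg_right (h.le_mul φ hφ) h.coercive_pos.le]

theorem sInf_energyLevels_neg_iff (h : IsRayleighTriple P N Q B κ M) :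
    sInf (energyLevels P N Q B) < 0 ↔ 1 < sSup (rayleighQuotients P Q B) := by
  rw [csInf_lt_iff h.bddBelow_energyLevels h.energyLevels_nonempty,
    lt_csSup_iff h.bddAbove_rayleighQuotients h.rayleighQuotients_nonempty]
  constructor
  · rintro ⟨_, ⟨φ, hφ, -, rfl⟩, hneg⟩
    exact ⟨_, ⟨φ, hφ, rfl⟩, (one_lt_div (h.Q_pos hφ)).2 (by linarith)⟩
  · rintro ⟨_, ⟨φ, hφ, rfl⟩, hgt⟩
    rw [one_lt_div (h.Q_pos hφ)] at hgt
    exact ⟨_, h.div_mem_energyLevels hφ, div_neg_of_neg_of_pos (by linarith) (h.pos φ hφ)⟩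

theorem sInf_energyLevels_pos_iff (h : IsRayleighTriple P N Q B κ M) :
    0 < sInf (energyLevels P N Q B) ↔ sSup (rayleighQuotients P Q B) < 1 := by
  set s := sInf (energyLevels P N Q B)
  set t := sSup (rayleighQuotients P Q B)
  have hM := h.M_nonneg
  constructor
  · intro hs
    -- `Q - B ≥ s N ≥ (s / M) B` bounds every quotient `B / Q` by `M / (M + s)`
    have hbound : t ≤ M / (M + s) := by
      refine csSup_le h.rayleighQuotients_nonempty ?_
      rintro _ ⟨φ, hφ, rfl⟩
      have hsN : s * N φ ≤ Q φ - B φ := (le_div_iff₀ (h.pos φ hφ)).1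
        (csInf_le h.bddBelow_energyLevels (h.div_mem_energyLevels hφ))
      rw [div_le_div_iff₀ (h.Q_pos hφ) (by positivity)]
      nlinarith [mul_le_mul_of_nonneg_left (h.le_mul φ hφ) hs.le, h.nonneg φ hφ]
    exact hbound.trans_lt ((div_lt_one (by positivity)).2 (by linarith))
  · intro ht
    refine (mul_pos h.coercive_pos (sub_pos.2 ht)).trans_le
      (le_csInf h.energyLevels_nonempty ?_)
    rintro _ ⟨φ, hφ, hNφ, rfl⟩
    have hBQ : B φ ≤ t * Q φ :=
      (div_le_iff₀ (h.Q_pos hφ)).1 (le_csSup h.bddAbove_rayleighQuotients ⟨φ, hφ, rfl⟩)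
    have hκQ := h.coercive φ hφ
    rw [hNφ, mul_one] at hκQ
    nlinarith

theorem neg_sInf_energyLevels_sign (h : IsRayleighTriple P N Q B κ M) :
    (0 < -sInf (energyLevels P N Q B) ↔ 1 < sSup (rayleighQuotients P Q B)) ∧
    (-sInf (energyLevels P N Q B) = 0 ↔ sSup (rayleighQuotients P Q B) = 1) ∧
    (-sInf (energyLevels P N Q B) < 0 ↔ sSup (rayleighQuotients P Q B) < 1) :=
  ⟨neg_pos.trans h.sInf_energyLevels_neg_iff,
    neg_eq_zero.trans (eq_iff_eq_of_lt_iff_of_gt_iff h.sInf_energyLevels_neg_iff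
      h.sInf_energyLevels_pos_iff),
    neg_lt_zero.trans h.sInf_energyLevels_pos_iff⟩

end IsRayleighTriple

end RayleighQuotient

theorem gradient_const_mul {F : Type*} [NormedAddCommGroup F] [InnerProductSpace ℝ F]
    [CompleteSpace F] (f : F → ℝ) (a : ℝ) (x : F) :
    gradient (fun y => a * f y) x = a • gradient f x := by
  change (InnerProductSpace.toDual ℝ F).symm (fderiv ℝ (a • f) x) = _
  rw [fderiv_const_smul_field, Pi.smul_apply, map_smul]
  rfl

theorem sq_norm_gradient_const_mul {F : Type*} [NormedAddCommGroup F] [InnerProductSpace ℝ F]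
    [CompleteSpace F] (f : F → ℝ) (a : ℝ) (x : F) :
    ‖gradient (fun y => a * f y) x‖ ^ 2 = a ^ 2 * ‖gradient f x‖ ^ 2 := by
  rw [gradient_const_mul, norm_smul, mul_pow, Real.norm_eq_abs, sq_abs]

section Admissible

variable {n : ℕ} {Ω : Set (EuclideanSpace ℝ (Fin n))}

theorem admissibleTest_one (h0 : volume Ω ≠ 0) (hfin : volume Ω ≠ ⊤) :
    AdmissibleTest Ω (fun _ => 1) := by
  refine ⟨contDiffOn_const, ?_, ?_, ?_⟩
  · simpa only [one_pow] using integrableOn_const hfin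
  · simp only [one_pow, setIntegral_const, smul_eq_mul, mul_one]
    exact ENNReal.toReal_pos h0 hfin
  · simp [gradient_fun_const]

theorem AdmissibleTest.const_mul {φ : EuclideanSpace ℝ (Fin n) → ℝ} (hφ : AdmissibleTest Ω φ)
    {a : ℝ} (ha : a ≠ 0) : AdmissibleTest Ω (fun x => a * φ x) := by
  obtain ⟨hC, hint, hpos, hgrad⟩ := hφ
  have hsq : (fun x => (a * φ x) ^ 2) = fun x => a ^ 2 * φ x ^ 2 := by ext; ring
  refine ⟨contDiffOn_const.mul hC, by rw [hsq]; exact hint.const_mul _,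
    by rw [hsq, integral_const_mul]; positivity, ?_⟩
  simp only [sq_norm_gradient_const_mul]
  exact hgrad.const_mul _

theorem AdmissibleTest.integrableOn_mul_sq {φ : EuclideanSpace ℝ (Fin n) → ℝ}
    (hφ : AdmissibleTest Ω φ) (hΩ : MeasurableSet Ω) {w : EuclideanSpace ℝ (Fin n) → ℝ}
    {M : ℝ} (hw : AEStronglyMeasurable w (volume.restrict Ω)) (hwM : ∀ x ∈ Ω, |w x| ≤ M) :
    IntegrableOn (fun x => w x * φ x ^ 2) Ω :=
  hφ.2.1.bdd_mul hw ((ae_restrict_iff' hΩ).2 (.of_forall hwM))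

variable {dc κ M : ℝ} {w : EuclideanSpace ℝ (Fin n) → ℝ}

theorem isRayleighTriple_admissibleTest (hΩ : MeasurableSet Ω) (h0 : volume Ω ≠ 0)
    (hfin : volume Ω ≠ ⊤) (hdc : 0 ≤ dc) (hκ : 0 < κ)
    (hw : AEStronglyMeasurable w (volume.restrict Ω)) (hw0 : ∀ x ∈ Ω, 0 ≤ w x)
    (hwM : ∀ x ∈ Ω, w x ≤ M) :
    IsRayleighTriple (AdmissibleTest Ω) (fun φ => ∫ x in Ω, φ x ^ 2)
      (fun φ => ∫ x in Ω, (dc * ‖gradient φ x‖ ^ 2 + κ * φ x ^ 2))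
      (fun φ => ∫ x in Ω, w x * φ x ^ 2) κ M := by
  have hwφ {φ} (hφ : AdmissibleTest Ω φ) : IntegrableOn (fun x => w x * φ x ^ 2) Ω :=
    hφ.integrableOn_mul_sq hΩ hw fun x hx => (abs_of_nonneg (hw0 x hx)).trans_le (hwM x hx)
  refine ⟨⟨_, admissibleTest_one h0 hfin⟩, fun φ hφ => hφ.2.2.1, hκ, fun φ hφ => ?_,
    fun φ hφ => setIntegral_nonneg hΩ fun x hx => mul_nonneg (hw0 x hx) (sq_nonneg _),
    fun φ hφ => ?_, fun φ hφ c hc => ?_⟩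
  · rw [← integral_const_mul]
    exact integral_mono (hφ.2.1.const_mul κ)
      ((hφ.2.2.2.const_mul dc).add (hφ.2.1.const_mul κ))
      fun x => le_add_of_nonneg_left (by positivity)
  · rw [← integral_const_mul]
    exact setIntegral_mono_on (hwφ hφ) (hφ.2.1.const_mul M) hΩ
      fun x hx => mul_le_mul_of_nonneg_right (hwM x hx) (sq_nonneg _)
  · have hsq (x) : (√c * φ x) ^ 2 = c * φ x ^ 2 := by rw [mul_pow, Real.sq_sqrt hc.le]
    have hgrad (x) : ‖gradient (fun y => √c * φ y) x‖ ^ 2 = c * ‖gradient φ x‖ ^ 2 := by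
      rw [sq_norm_gradient_const_mul, Real.sq_sqrt hc.le]
    refine ⟨_, hφ.const_mul (Real.sqrt_pos.2 hc).ne', ?_, ?_, ?_⟩ <;>
      simp only [hsq, hgrad, ← integral_const_mul] <;> congr 1 with x <;> ring

theorem principalEig_eq_neg_sInf_energyLevels
    (hwφ : ∀ φ, AdmissibleTest Ω φ → IntegrableOn (fun x => w x * φ x ^ 2) Ω) :
    principalEig Ω dc κ w =
      -sInf (energyLevels (AdmissibleTest Ω) (fun φ => ∫ x in Ω, φ x ^ 2)
      (fun φ => ∫ x in Ω, (dc * ‖gradient φ x‖ ^ 2 + κ * φ x ^ 2))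
      (fun φ => ∫ x in Ω, w x * φ x ^ 2)) := by
  unfold principalEig energyLevels
  congr 3 with r
  refine exists_congr fun φ => and_congr_right fun hφ => and_congr_right fun _ => ?_
  have hQφ : IntegrableOn (fun x => dc * ‖gradient φ x‖ ^ 2 + κ * φ x ^ 2) Ω :=
    (hφ.2.2.2.const_mul dc).add (hφ.2.1.const_mul κ)
  rw [← integral_sub hQφ (hwφ φ hφ)]
  congr! 3 with x
  ring

theorem principalEig_sign_eq_reproNumber_sign (hΩ : MeasurableSet Ω) (h0 : volume Ω ≠ 0)
    (hfin : volume Ω ≠ ⊤) (hdc : 0 ≤ dc) (hκ : 0 < κ)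
    (hw : AEStronglyMeasurable w (volume.restrict Ω)) (hw0 : ∀ x ∈ Ω, 0 ≤ w x)
    (hwM : ∀ x ∈ Ω, w x ≤ M) :
    (0 < principalEig Ω dc κ w ↔ 1 < reproNumber Ω dc κ w) ∧
    (principalEig Ω dc κ w = 0 ↔ reproNumber Ω dc κ w = 1) ∧
    (principalEig Ω dc κ w < 0 ↔ reproNumber Ω dc κ w < 1) := by
  rw [principalEig_eq_neg_sInf_energyLevels fun φ hφ => hφ.integrableOn_mul_sq hΩ hw
    fun x hx => (abs_of_nonneg (hw0 x hx)).trans_le (hwM x hx)]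
  exact
    (isRayleighTriple_admissibleTest hΩ h0 hfin hdc hκ hw hw0 hwM).neg_sInf_energyLevels_sign

end Admissible

theorem R0_sign_eq_eigenvalue_sign_general {n : ℕ} (Ω : Set (EuclideanSpace ℝ (Fin n)))
    (hΩopen : IsOpen Ω) (hΩbdd : Bornology.IsBounded Ω) (hΩconn : IsConnected Ω)
    (dI β γ δ α : ℝ) (hdI : 0 < dI) (hβ : 0 < β) (hγ : 0 < γ) (hδ : 0 < δ)
    (St : EuclideanSpace ℝ (Fin n) → ℝ) (hStcont : ContinuousOn St (closure Ω))
    (hStbdd : ∃ C : ℝ, ∀ x ∈ closure Ω, |St x| ≤ C)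
    (hStpos : ∀ x ∈ closure Ω, 0 < St x) :
    (0 < principalEig Ω dI (γ + δ) (fun x => β * (1 - α) ^ 2 * St x) ↔
      1 < reproNumber Ω dI (γ + δ) (fun x => β * (1 - α) ^ 2 * St x)) ∧
    (principalEig Ω dI (γ + δ) (fun x => β * (1 - α) ^ 2 * St x) = 0 ↔
      reproNumber Ω dI (γ + δ) (fun x => β * (1 - α) ^ 2 * St x) = 1) ∧
    (principalEig Ω dI (γ + δ) (fun x => β * (1 - α) ^ 2 * St x) < 0 ↔
      reproNumber Ω dI (γ + δ) (fun x => β * (1 - α) ^ 2 * St x) < 1) := by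
  obtain ⟨C, hC⟩ := hStbdd
  have hcoef : 0 ≤ β * (1 - α) ^ 2 := by positivity
  refine principalEig_sign_eq_reproNumber_sign (M := β * (1 - α) ^ 2 * C)
    hΩopen.measurableSet (hΩopen.measure_pos volume hΩconn.nonempty).ne'
    hΩbdd.measure_lt_top.ne hdI.le (add_pos hγ hδ) ?_ ?_ ?_
  · exact (continuousOn_const.mul (hStcont.mono subset_closure)).aestronglyMeasurable
      hΩopen.measurableSet
  · exact fun x hx => mul_nonneg hcoef (hStpos x (subset_closure hx)).le
  · exact fun x hx =>
      mul_le_mul_of_nonneg_left ((le_abs_self _).trans (hC x (subset_closure hx))) hcoef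

theorem R0_sign_eq_eigenvalue_sign {n : ℕ} (hn : 1 ≤ n) (Ω : Set (EuclideanSpace ℝ (Fin n)))
    (hΩopen : IsOpen Ω) (hΩbdd : Bornology.IsBounded Ω) (hΩconn : IsConnected Ω)
    (dI β γ δ α : ℝ) (hdI : 0 < dI) (hβ : 0 < β) (hγ : 0 < γ) (hδ : 0 < δ)
    (hα : α ∈ Set.Icc (0:ℝ) 1)
    (St : EuclideanSpace ℝ (Fin n) → ℝ) (hStcont : ContinuousOn St (closure Ω))
    (hStbdd : ∃ C : ℝ, ∀ x ∈ closure Ω, |St x| ≤ C)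
    (hStpos : ∀ x ∈ closure Ω, 0 < St x) :
    (0 < principalEig Ω dI (γ + δ) (fun x => β * (1 - α) ^ 2 * St x) ↔
      1 < reproNumber Ω dI (γ + δ) (fun x => β * (1 - α) ^ 2 * St x)) ∧
    (principalEig Ω dI (γ + δ) (fun x => β * (1 - α) ^ 2 * St x) = 0 ↔
      reproNumber Ω dI (γ + δ) (fun x => β * (1 - α) ^ 2 * St x) = 1) ∧
    (principalEig Ω dI (γ + δ) (fun x => β * (1 - α) ^ 2 * St x) < 0 ↔
      reproNumber Ω dI (γ + δ) (fun x => β * (1 - α) ^ 2 * St x) < 1) :=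
  R0_sign_eq_eigenvalue_sign_general Ω hΩopen hΩbdd hΩconn dI β γ δ α hdI hβ hγ hδ St hStcont hStbdd
    hStpos
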